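/- Let m ≥ 2 and let L be a finite thick generalized m-gon. Then there exist integers s, t ≥ 2 such that every vertex of L of the first type has degree s + 1 and every vertex of L of the second type has degree t + 1; in particular, any two vertices of L of the same type have the same degree. -/

import Mathlib

open SimpleGraph

variable {V : Type*}

/-- A generalized `m`-gon: a connected bipartite simple graph of diameter `m`
and girth `2 * m`. -/
def IsGenPolygon (G : SimpleGraph V) (m : ℕ) : Prop :=
  G.Connected ∧
    (∃ c : V → Bool, ∀ ⦃v w : V⦄, G.Adj v w → c v ≠ c w) ∧
    (∀ u v : V, G.dist u v ≤ m) ∧ (∃ u v : V, G.dist u v = m) ∧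
    G.egirth = (2 * m : ℕ∞)

/-- A graph is thick if every vertex has at least three neighbours. -/
def Thick (G : SimpleGraph V) : Prop :=
  ∀ v : V, ∃ a b c : V, G.Adj v a ∧ G.Adj v b ∧ G.Adj v c ∧ a ≠ b ∧ a ≠ c ∧ b ≠ c

/-- An apartment of a generalized `m`-gon: a subgraph which is a cycle of
length `2 * m`. -/
def IsApartment (G : SimpleGraph V) (m : ℕ) (A : G.Subgraph) : Prop :=
  ∃ (v : V) (w : G.Walk v v), w.IsCycle ∧ w.length = 2 * m ∧ w.toSubgraph = A

/-- A subgraph which is a path with exactly `k` edges. -/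
def IsPathSubgraph (G : SimpleGraph V) (k : ℕ) (P : G.Subgraph) : Prop :=
  ∃ (u v : V) (p : G.Walk u v), p.IsPath ∧ p.length = k ∧ p.toSubgraph = P

/-! Opposite vertices `x`, `y` (at distance `m`) have the same degree: every neighbour of `x`
lies at distance `m - 1` from `y`, and sending it to the neighbour of `y` on a geodesic towards
it is injective, because girth `2m` makes the neighbour of a vertex that is closest to a point
at distance `< m` unique. By thickness, from two vertices at distance `2` one can walk away from
both at once, up to a vertex opposite to both; so vertices at distance `2`, and hence all
vertices of one type, have the same degree. -/

namespace SimpleGraph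

variable {G : SimpleGraph V} {a b x y : V}

lemma Walk.dist_le_length_of_mem_support {p : G.Walk a y} (hx : x ∈ p.support) :
    G.dist x y ≤ p.length := by
  classical
  exact (dist_le (p.dropUntil x hx)).trans (p.length_dropUntil_le_length hx)

lemma exists_adj_dist_eq_of_dist_eq_add_one {k : ℕ} (h : G.dist x y = k + 1) :
    ∃ a, G.Adj x a ∧ G.dist a y = k := by
  obtain ⟨p, hp⟩ := exists_walk_of_dist_ne_zero (G := G) (u := x) (v := y) (by omega)
  cases p with
  | nil => simp at h
  | @cons _ a _ hxa p =>
    refine ⟨a, hxa, le_antisymm ?_ ?_⟩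
    · have := dist_le p
      simp only [Walk.length_cons] at hp
      omega
    · rcases hxa.symm.diff_dist_adj (u := y) with h' | h' | h' <;>
        rw [dist_comm (u := y), dist_comm (u := y)] at h' <;> omega

lemma Connected.even_dist_iff (hconn : G.Connected) (col : G.Coloring Bool) (u v : V) :
    Even (G.dist u v) ↔ (col u ↔ col v) := by
  obtain ⟨p, hp⟩ := hconn.exists_walk_length_eq_dist u v
  rw [← hp, col.even_length_iff_congr]

lemma Connected.dist_eq_add_one_or_add_one_eq_of_adj (hconn : G.Connected)
    (col : G.Coloring Bool) (hxa : G.Adj x a) (y : V) :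
    G.dist a y = G.dist x y + 1 ∨ G.dist a y + 1 = G.dist x y := by
  have hne : G.dist a y ≠ G.dist x y := fun h => by
    have ha := hconn.even_dist_iff col a y
    have hx := hconn.even_dist_iff col x y
    rw [h] at ha
    exact col.valid hxa (Bool.eq_iff_iff.mpr (by tauto))
  rcases hxa.diff_dist_adj (u := y) with h | h | h <;>
    rw [dist_comm (u := y), dist_comm (u := y)] at h <;> omega

lemma eq_of_adj_of_dist_lt_of_two_mul_dist_lt_egirth (hxa : G.Adj x a) (hxb : G.Adj x b)
    (ha : G.dist a y < G.dist x y) (hb : G.dist b y < G.dist x y)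
    (hg : 2 * (G.dist x y : ℕ∞) < G.egirth) : a = b := by
  classical
  by_contra hab
  have hr : G.Reachable x y := Reachable.of_dist_ne_zero (by omega)
  obtain ⟨p, hp⟩ := (hxa.symm.reachable.trans hr).exists_walk_length_eq_dist
  obtain ⟨q, hq⟩ := (hxb.symm.reachable.trans hr).exists_walk_length_eq_dist
  have hxp : x ∉ p.support := fun h => by have := p.dist_le_length_of_mem_support h; omega
  have hxq : x ∉ q.support := fun h => by have := q.dist_le_length_of_mem_support h; omega
  -- `x` together with a path from `a` to `b` through `y` closes a cycle shorter than the girth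
  set r := (p.append q.reverse).bypass
  have hxr : x ∉ r.support := fun h => by
    have := (p.append q.reverse).support_bypass_subset_support h
    simp_all [Walk.mem_support_append_iff]
  have hrl : r.length ≤ p.length + q.length := by
    simpa using (p.append q.reverse).length_bypass_le_length
  have hcyc : (Walk.cons hxa (r.concat hxb.symm)).IsCycle := by
    refine (Walk.cons_isCycle_iff _ hxa).mpr ⟨(Walk.bypass_isPath _).concat hxr _, ?_⟩
    rw [Walk.edges_concat, List.concat_eq_append, List.mem_append, List.mem_singleton,
      Sym2.eq_iff, not_or]
    exact ⟨fun h => hxr (r.fst_mem_support_of_mem_edges h), by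
      rintro (⟨-, rfl⟩ | ⟨-, rfl⟩) <;> simp_all⟩
  have hshort := hg.trans_le (egirth_le_length hcyc)
  simp only [Walk.length_cons, Walk.length_concat] at hshort
  norm_cast at hshort
  omega

lemma Connected.dist_eq_add_one_of_adj_of_ne (hconn : G.Connected) (col : G.Coloring Bool)
    (hxa : G.Adj x a) (ha : G.dist a y < G.dist x y) (hxb : G.Adj x b) (hba : b ≠ a)
    (hg : 2 * (G.dist x y : ℕ∞) < G.egirth) : G.dist b y = G.dist x y + 1 :=
  (hconn.dist_eq_add_one_or_add_one_eq_of_adj col hxb y).resolve_right fun h =>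
    hba (eq_of_adj_of_dist_lt_of_two_mul_dist_lt_egirth hxb hxa (by omega) ha hg)

end SimpleGraph

section Thick

variable {G : SimpleGraph V} {x y z : V}

lemma Thick.exists_adj_ne_ne (hthick : Thick G) (v a b : V) :
    ∃ w, G.Adj v w ∧ w ≠ a ∧ w ≠ b := by
  obtain ⟨p, q, r, hp, hq, hr, hpq, hpr, hqr⟩ := hthick v
  by_contra! h
  by_cases hpa : p = a <;> by_cases hqa : q = a <;> grind

lemma Thick.three_le_degree (hthick : Thick G) (v : V) [Fintype (G.neighborSet v)] :
    3 ≤ G.degree v := by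
  classical
  obtain ⟨p, q, r, hp, hq, hr, hpq, hpr, hqr⟩ := hthick v
  rw [← card_neighborFinset_eq_degree]
  calc 3 = ({p, q, r} : Finset V).card :=
        (Finset.card_eq_three.mpr ⟨p, q, r, hpq, hpr, hqr, rfl⟩).symm
    _ ≤ _ := Finset.card_le_card (by simp [Finset.insert_subset_iff, hp, hq, hr])

lemma Thick.exists_adj_dist_eq_add_one (hthick : Thick G) (hconn : G.Connected)
    (col : G.Coloring Bool) (hx : G.dist z x ≠ 0) (hy : G.dist z y ≠ 0)
    (hgx : 2 * (G.dist z x : ℕ∞) < G.egirth) (hgy : 2 * (G.dist z y : ℕ∞) < G.egirth) :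
    ∃ w, G.Adj z w ∧ G.dist w x = G.dist z x + 1 ∧ G.dist w y = G.dist z y + 1 := by
  obtain ⟨p, hzp, hp⟩ := exists_adj_dist_eq_of_dist_eq_add_one (Nat.sub_one_add_one hx).symm
  obtain ⟨q, hzq, hq⟩ := exists_adj_dist_eq_of_dist_eq_add_one (Nat.sub_one_add_one hy).symm
  obtain ⟨w, hzw, hwp, hwq⟩ := hthick.exists_adj_ne_ne z p q
  exact ⟨w, hzw, hconn.dist_eq_add_one_of_adj_of_ne col hzp (by omega) hzw hwp hgx,
    hconn.dist_eq_add_one_of_adj_of_ne col hzq (by omega) hzw hwq hgy⟩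

end Thick

namespace IsGenPolygon

variable {G : SimpleGraph V} {m : ℕ} {x y : V}

lemma two_mul_dist_lt_egirth (hG : IsGenPolygon G m) (h : G.dist x y < m) :
    2 * (G.dist x y : ℕ∞) < G.egirth := by
  rw [hG.2.2.2.2]
  exact_mod_cast (by omega : 2 * G.dist x y < 2 * m)

lemma exists_dist_eq_dist_eq_of_dist_eq_two (hG : IsGenPolygon G m) (hthick : Thick G)
    (hxy : G.dist x y = 2) : ∃ z, G.dist z x = m ∧ G.dist z y = m := by
  obtain ⟨hconn, ⟨c, hc⟩, hdiam, -, -⟩ := id hG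
  suffices ∀ j, 1 ≤ j → j ≤ m → ∃ z, G.dist z x = j ∧ G.dist z y = j from
    this m (by have := hdiam x y; omega) le_rfl
  intro j hj
  induction j, hj using Nat.le_induction with
  | base =>
    obtain ⟨z, hxz, hzy⟩ := exists_adj_dist_eq_of_dist_eq_add_one (k := 1) hxy
    exact fun _ => ⟨z, dist_eq_one_iff_adj.mpr hxz.symm, hzy⟩
  | succ j hj ih =>
    intro hjm
    obtain ⟨z, hzx, hzy⟩ := ih (by omega)
    obtain ⟨w, -, hwx, hwy⟩ := hthick.exists_adj_dist_eq_add_one (z := z) (x := x) (y := y)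
      hconn (Coloring.mk c fun h => hc h) (by omega) (by omega)
      (hG.two_mul_dist_lt_egirth (by omega)) (hG.two_mul_dist_lt_egirth (by omega))
    exact ⟨w, by omega, by omega⟩

variable [G.LocallyFinite]

lemma degree_le_of_dist_eq (hG : IsGenPolygon G m) (hm : 2 ≤ m) (hxy : G.dist x y = m) :
    G.degree x ≤ G.degree y := by
  obtain ⟨hconn, ⟨c, hc⟩, hdiam, -, -⟩ := id hG
  have hnbr : ∀ {u v a : V}, G.dist u v = m → G.Adj u a → G.dist a v + 1 = m :=
    fun {u v a} huv hua => by
      have := hdiam a v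
      rcases hconn.dist_eq_add_one_or_add_one_eq_of_adj (Coloring.mk c fun h => hc h) hua v
        with h | h <;> omega
  rw [← card_neighborFinset_eq_degree, ← card_neighborFinset_eq_degree]
  -- a neighbour `a` of `x` is matched with the neighbour `b` of `y` on a geodesic from `y` to `a`
  refine Finset.card_le_card_of_forall_subsingleton (fun a b => G.dist b a + 2 = m) ?_ ?_
  · intro a ha
    have hya : G.dist y a = (m - 2) + 1 := by
      have := hnbr hxy ((mem_neighborFinset _ _ _).mp ha)
      rw [SimpleGraph.dist_comm]
      omega
    obtain ⟨b, hyb, hb⟩ := exists_adj_dist_eq_of_dist_eq_add_one hya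
    exact ⟨b, (mem_neighborFinset _ _ _).mpr hyb, by omega⟩
  · intro b hb a ha a' ha'
    simp only [Set.mem_ofPred_eq, mem_neighborFinset] at hb ha ha'
    have hbx := hnbr (SimpleGraph.dist_comm.trans hxy) hb
    rw [SimpleGraph.dist_comm] at hbx
    exact eq_of_adj_of_dist_lt_of_two_mul_dist_lt_egirth (y := b) ha.1 ha'.1
      (by rw [SimpleGraph.dist_comm]; omega) (by rw [SimpleGraph.dist_comm]; omega)
      (hG.two_mul_dist_lt_egirth (by omega))

lemma degree_eq_of_dist_eq (hG : IsGenPolygon G m) (hm : 2 ≤ m) (hxy : G.dist x y = m) :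
    G.degree x = G.degree y :=
  (hG.degree_le_of_dist_eq hm hxy).antisymm
    (hG.degree_le_of_dist_eq hm (SimpleGraph.dist_comm.trans hxy))

lemma degree_eq_of_dist_eq_two (hG : IsGenPolygon G m) (hthick : Thick G)
    (hxy : G.dist x y = 2) : G.degree x = G.degree y := by
  have hm : 2 ≤ m := hxy ▸ hG.2.2.1 x y
  obtain ⟨z, hzx, hzy⟩ := hG.exists_dist_eq_dist_eq_of_dist_eq_two hthick hxy
  rw [← hG.degree_eq_of_dist_eq hm hzx, hG.degree_eq_of_dist_eq hm hzy]

lemma degree_eq_of_dist_eq_two_mul (hG : IsGenPolygon G m) (hthick : Thick G) (n : ℕ) :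
    ∀ {x y : V}, G.dist x y = 2 * n → G.degree x = G.degree y := by
  induction n with
  | zero => intro x y h; rw [hG.1.dist_eq_zero_iff.mp h]
  | succ n ih =>
    intro x y hxy
    obtain ⟨a, hxa, hay⟩ := exists_adj_dist_eq_of_dist_eq_add_one (k := 2 * n + 1) (by omega)
    obtain ⟨b, hab, hby⟩ := exists_adj_dist_eq_of_dist_eq_add_one hay
    have hxb : G.dist x b = 2 := by
      have h₁ : G.dist x b ≤ G.dist x a + G.dist a b := hG.1.dist_triangle
      have h₂ : G.dist x y ≤ G.dist x b + G.dist b y := hG.1.dist_triangle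
      rw [dist_eq_one_iff_adj.mpr hxa, dist_eq_one_iff_adj.mpr hab] at h₁
      omega
    rw [hG.degree_eq_of_dist_eq_two hthick hxb, ih hby]

lemma degree_eq_of_color_eq (hG : IsGenPolygon G m) (hthick : Thick G)
    (col : G.Coloring Bool) (h : col x = col y) : G.degree x = G.degree y := by
  obtain ⟨n, hn⟩ := (hG.1.even_dist_iff col x y).mpr (by rw [h])
  exact hG.degree_eq_of_dist_eq_two_mul hthick n (by omega)

end IsGenPolygon

theorem exists_parameters_general
    (G : SimpleGraph V) [Fintype V] [DecidableRel G.Adj]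
    (m : ℕ) (hG : IsGenPolygon G m) (hthick : Thick G)
    (c : V → Bool) (hc : ∀ ⦃v w : V⦄, G.Adj v w → c v ≠ c w) :
    ∃ s t : ℕ, 2 ≤ s ∧ 2 ≤ t ∧
      (∀ v : V, c v = false → G.degree v = s + 1) ∧
      (∀ v : V, c v = true → G.degree v = t + 1) := by
  have hparam : ∀ b : Bool, ∃ d, 2 ≤ d ∧ ∀ v, c v = b → G.degree v = d + 1 := by
    intro b
    by_cases hb : ∃ v, c v = b
    · obtain ⟨v₀, hv₀⟩ := hb
      have h₀ := hthick.three_le_degree v₀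
      refine ⟨G.degree v₀ - 1, by omega, fun v hv => ?_⟩
      have := hG.degree_eq_of_color_eq hthick (Coloring.mk c fun h => hc h) (hv.trans hv₀.symm)
      omega
    · exact ⟨2, le_rfl, fun v hv => absurd ⟨v, hv⟩ hb⟩
  obtain ⟨s, hs, hs'⟩ := hparam false
  obtain ⟨t, ht, ht'⟩ := hparam true
  exact ⟨s, t, hs, ht, hs', ht'⟩

/-- A finite thick generalized `m`-gon has parameters `(s, t)` with `s, t ≥ 2`:
every vertex of the first type has degree `s + 1`, and every vertex of the second
type has degree `t + 1`. In particular vertices of the same type have the same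
degree. -/
theorem exists_parameters
    (G : SimpleGraph V) [Fintype V] [DecidableRel G.Adj]
    (m : ℕ) (hm : 2 ≤ m) (hG : IsGenPolygon G m) (hthick : Thick G)
    (c : V → Bool) (hc : ∀ ⦃v w : V⦄, G.Adj v w → c v ≠ c w) :
    ∃ s t : ℕ, 2 ≤ s ∧ 2 ≤ t ∧
      (∀ v : V, c v = false → G.degree v = s + 1) ∧
      (∀ v : V, c v = true → G.degree v = t + 1) :=
  exists_parameters_general G m hG hthick c hc
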